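/- On an interior facet e with unit normal n, if u_h is divergence-free on both adjacent elements and its normal component u_h·n is continuous across e, then for any fixed point x ∈ e with u_h(x)·n ≠ 0, the jump of the iterated convective derivative satisfies ⟦(u_h·∇)^{α'+1} v⟧ = (u_h·n)^{α'+1} ⟦∂_n^{α'+1} v⟧ for fields v whose tangential derivatives of all orders up to α' are continuous across e; in particular the weighted jump identity η⟦∂_n^{α'+1}u⟧·⟦∂_n^{α'+1}v⟧ = (η/|u_h·n|^{2(α'+1)}) ⟦∂_{u_h}^{α'+1}u⟧·⟦∂_{u_h}^{α'+1}v⟧ holds. -/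

import Mathlib

open scoped RealInnerProductSpace

namespace ConvJumpAux

open Function

variable {d : ℕ}

local notation "E" => EuclideanSpace ℝ (Fin d)

lemma topsucc : ((⊤ : ℕ∞) : WithTop ℕ∞) + 1 ≤ ((⊤ : ℕ∞) : WithTop ℕ∞) := by simp

lemma jet0 {F : Type} [NormedAddCommGroup F] [NormedSpace ℝ F] {f₁ f₂ : E → F} {y : E}
    (h : iteratedFDeriv ℝ 0 f₁ y = iteratedFDeriv ℝ 0 f₂ y) : f₁ y = f₂ y := by
  have := congrArg (fun L : ContinuousMultilinearMap ℝ (fun _ : Fin 0 => E) F =>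
    L (fun _ => 0)) h
  simpa using this

lemma jfd {F : Type} [NormedAddCommGroup F] [NormedSpace ℝ F] {f₁ f₂ : E → F} {m : ℕ} {y : E}
    (h : iteratedFDeriv ℝ (m + 1) f₁ y = iteratedFDeriv ℝ (m + 1) f₂ y) :
    iteratedFDeriv ℝ m (fderiv ℝ f₁) y = iteratedFDeriv ℝ m (fderiv ℝ f₂) y := by
  apply (continuousMultilinearCurryRightEquiv' ℝ m E F).symm.injective
  have h₁ : (continuousMultilinearCurryRightEquiv' ℝ m E F).symm
      (iteratedFDeriv ℝ m (fderiv ℝ f₁) y) = iteratedFDeriv ℝ (m + 1) f₁ y :=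
    (iteratedFDeriv_succ_eq_comp_right (𝕜 := ℝ) (f := f₁) (n := m) (x := y)).symm
  have h₂ : (continuousMultilinearCurryRightEquiv' ℝ m E F).symm
      (iteratedFDeriv ℝ m (fderiv ℝ f₂) y) = iteratedFDeriv ℝ (m + 1) f₂ y :=
    (iteratedFDeriv_succ_eq_comp_right (𝕜 := ℝ) (f := f₂) (n := m) (x := y)).symm
  rw [h₁, h₂, h]

lemma smoothD {F : Type} [NormedAddCommGroup F] [NormedSpace ℝ F] {f : E → F}
    (hf : ContDiff ℝ (⊤ : ℕ∞) f) (w : E) : ContDiff ℝ (⊤ : ℕ∞) (fun z => fderiv ℝ f z w) :=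
  (ContinuousLinearMap.apply ℝ F w).contDiff.comp (hf.fderiv_right topsucc)

lemma evalConst {F : Type} [NormedAddCommGroup F] [NormedSpace ℝ F] (k : ℕ) {f : E → F}
    (hf : ContDiff ℝ (⊤ : ℕ∞) f) (cv y : E) (v : Fin k → E) :
    iteratedFDeriv ℝ k (fun z => fderiv ℝ f z cv) y v
      = (iteratedFDeriv ℝ k (fderiv ℝ f) y v) cv := by
  have h := (ContinuousLinearMap.apply ℝ F cv).iteratedFDeriv_comp_left
      (f := fderiv ℝ f) ((hf.fderiv_right topsucc).contDiffAt (x := y)) (i := k) (by exact_mod_cast le_top)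
  have e1 : (⇑(ContinuousLinearMap.apply ℝ F cv) ∘ fderiv ℝ f)
      = fun z => fderiv ℝ f z cv := rfl
  rw [e1] at h
  rw [h]
  rfl

/-- Tangential first derivatives of functions agreeing on `e` agree. -/
lemma tangent (e : Set E) (n₀ : E) (c : ℝ)
    (hplane : ∀ y ∈ e, ⟪y, n₀⟫ = c)
    (hrelopen : ∀ y ∈ e, ∃ δ > (0:ℝ), ∀ z, ⟪z, n₀⟫ = c → ‖z - y‖ < δ → z ∈ e)
    {F : Type} [NormedAddCommGroup F] [NormedSpace ℝ F]
    {f₁ f₂ : E → F} (h₁ : Differentiable ℝ f₁) (h₂ : Differentiable ℝ f₂)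
    (heq : ∀ y ∈ e, f₁ y = f₂ y) {x : E} (hx : x ∈ e) {t : E} (ht : ⟪t, n₀⟫ = 0) :
    fderiv ℝ f₁ x t = fderiv ℝ f₂ x t := by
  obtain ⟨δ, hδ, hmem⟩ := hrelopen x hx
  have hline : ∀ s : ℝ, |s| < δ / (‖t‖ + 1) → x + s • t ∈ e := by
    intro s hs
    apply hmem
    · rw [inner_add_left, real_inner_smul_left, hplane x hx, ht]; ring
    · have h1 : ‖x + s • t - x‖ = |s| * ‖t‖ := by
        rw [add_sub_cancel_left, norm_smul, Real.norm_eq_abs]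
      rw [h1]
      have h2 : |s| * (‖t‖ + 1) < δ := by
        rw [lt_div_iff₀ (by positivity)] at hs
        exact hs
      nlinarith [abs_nonneg s, norm_nonneg t]
  have hev : (fun s : ℝ => f₁ (x + s • t)) =ᶠ[nhds (0:ℝ)] fun s => f₂ (x + s • t) := by
    have hpos : (0:ℝ) < δ / (‖t‖ + 1) := by positivity
    filter_upwards [Metric.ball_mem_nhds (0:ℝ) hpos] with s hs
    have : |s| < δ / (‖t‖ + 1) := by
      simpa [Real.dist_eq] using hs
    exact heq _ (hline s this)
  have hl : HasDerivAt (fun s : ℝ => x + s • t) t 0 := by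
    simpa using ((hasDerivAt_id (0:ℝ)).smul_const t).const_add x
  have h0 : x + (0:ℝ) • t = x := by simp
  have hc₁ : HasDerivAt (fun s : ℝ => f₁ (x + s • t)) (fderiv ℝ f₁ x t) 0 := by
    have := ((h₁ x).hasFDerivAt).comp_hasDerivAt_of_eq 0 hl h0.symm
    exact this
  have hc₂ : HasDerivAt (fun s : ℝ => f₂ (x + s • t)) (fderiv ℝ f₂ x t) 0 := by
    have := ((h₂ x).hasFDerivAt).comp_hasDerivAt_of_eq 0 hl h0.symm
    exact this
  exact (hc₁.congr_of_eventuallyEq hev.symm).unique hc₂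

/-- Derivative exchange: `∂(∂_t f) = ∂_t (∂ f)` for smooth `f`. -/
lemma exch {F : Type} [NormedAddCommGroup F] [NormedSpace ℝ F] (f : E → F)
    (hf : ContDiff ℝ (⊤ : ℕ∞) f) (t : E) :
    fderiv ℝ (fun z => fderiv ℝ f z t) = fun y => fderiv ℝ (fderiv ℝ f) y t := by
  funext y
  ext w
  have hd : DifferentiableAt ℝ (fderiv ℝ f) y :=
    (hf.fderiv_right topsucc).differentiable (by simp) y
  have h1 : fderiv ℝ (fun z => fderiv ℝ f z t) y
      = (ContinuousLinearMap.apply ℝ F t).comp (fderiv ℝ (fderiv ℝ f) y) :=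
    ((ContinuousLinearMap.apply ℝ F t).hasFDerivAt.comp y hd.hasFDerivAt).fderiv
  rw [h1]
  have hsym := ((hf.contDiffAt (x := y)).isSymmSndFDerivAt (by simp; exact WithTop.coe_le_coe.mpr le_top)).eq w t
  simpa using hsym

/-- Jets of `∂_t f` of order `≤ k` agree across `e`, for tangential `t`,
if jets of `f` of order `≤ k` agree across `e`. -/
lemma Ulem (e : Set E) (n₀ : E) (c : ℝ)
    (hplane : ∀ y ∈ e, ⟪y, n₀⟫ = c)
    (hrelopen : ∀ y ∈ e, ∃ δ > (0:ℝ), ∀ z, ⟪z, n₀⟫ = c → ‖z - y‖ < δ → z ∈ e)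
    (k : ℕ) :
    ∀ {F : Type} [NormedAddCommGroup F] [NormedSpace ℝ F] (f₁ f₂ : E → F),
      ContDiff ℝ (⊤ : ℕ∞) f₁ → ContDiff ℝ (⊤ : ℕ∞) f₂ →
      (∀ m ≤ k, ∀ y ∈ e, iteratedFDeriv ℝ m f₁ y = iteratedFDeriv ℝ m f₂ y) →
      ∀ t : E, ⟪t, n₀⟫ = 0 → ∀ x ∈ e,
      iteratedFDeriv ℝ k (fun z => fderiv ℝ f₁ z t) x
        = iteratedFDeriv ℝ k (fun z => fderiv ℝ f₂ z t) x := by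
  induction k with
  | zero =>
    intro F _ _ f₁ f₂ h₁ h₂ hj t ht x hx
    ext v
    simp only [iteratedFDeriv_zero_apply]
    exact tangent e n₀ c hplane hrelopen (h₁.differentiable (by simp))
      (h₂.differentiable (by simp)) (fun y hy => jet0 (hj 0 (Nat.zero_le _) y hy)) hx ht
  | succ k IH =>
    intro F _ _ f₁ f₂ h₁ h₂ hj t ht x hx
    have hIH := IH (fderiv ℝ f₁) (fderiv ℝ f₂) (h₁.fderiv_right topsucc)
      (h₂.fderiv_right topsucc)
      (fun m hm y hy => jfd (hj (m+1) (by omega) y hy)) t ht x hx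
    ext v
    have l1 : iteratedFDeriv ℝ (k+1) (fun z => fderiv ℝ f₁ z t) x v
        = (iteratedFDeriv ℝ k (fderiv ℝ (fun z => fderiv ℝ f₁ z t)) x (Fin.init v))
            (v (Fin.last k)) := iteratedFDeriv_succ_apply_right v
    have l2 : iteratedFDeriv ℝ (k+1) (fun z => fderiv ℝ f₂ z t) x v
        = (iteratedFDeriv ℝ k (fderiv ℝ (fun z => fderiv ℝ f₂ z t)) x (Fin.init v))
            (v (Fin.last k)) := iteratedFDeriv_succ_apply_right v
    rw [l1, l2, exch f₁ h₁ t, exch f₂ h₂ t, hIH]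

/-- Product formula for the jump of the top-order iterated derivative. -/
lemma Aprod (e : Set E) (n₀ : E) (c : ℝ)
    (hplane : ∀ y ∈ e, ⟪y, n₀⟫ = c)
    (hrelopen : ∀ y ∈ e, ∃ δ > (0:ℝ), ∀ z, ⟪z, n₀⟫ = c → ‖z - y‖ < δ → z ∈ e)
    (hn1 : ⟪n₀, n₀⟫ = 1) (k : ℕ) :
    ∀ {F : Type} [NormedAddCommGroup F] [NormedSpace ℝ F] (f₁ f₂ : E → F),
      ContDiff ℝ (⊤ : ℕ∞) f₁ → ContDiff ℝ (⊤ : ℕ∞) f₂ →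
      (∀ m < k, ∀ y ∈ e, iteratedFDeriv ℝ m f₁ y = iteratedFDeriv ℝ m f₂ y) →
      ∀ x ∈ e, ∀ v : Fin k → E,
      iteratedFDeriv ℝ k f₁ x v - iteratedFDeriv ℝ k f₂ x v
        = (∏ i, ⟪v i, n₀⟫) •
          (iteratedFDeriv ℝ k f₁ x (fun _ => n₀) - iteratedFDeriv ℝ k f₂ x (fun _ => n₀)) := by
  induction k with
  | zero =>
    intro F _ _ f₁ f₂ h₁ h₂ hj x hx v
    simp
  | succ k IH =>
    intro F _ _ f₁ f₂ h₁ h₂ hj x hx v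
    set β := ⟪v (Fin.last k), n₀⟫ with hβ
    set t := v (Fin.last k) - β • n₀ with hft
    have ht : ⟪t, n₀⟫ = 0 := by
      rw [hft, inner_sub_left, real_inner_smul_left, hn1, hβ]; ring
    have hsplit : v (Fin.last k) = β • n₀ + t := by rw [hft]; abel
    set M₁ := iteratedFDeriv ℝ k (fderiv ℝ f₁) x (Fin.init v) with hM₁
    set M₂ := iteratedFDeriv ℝ k (fderiv ℝ f₂) x (Fin.init v) with hM₂
    have l1 : iteratedFDeriv ℝ (k+1) f₁ x v = M₁ (v (Fin.last k)) :=
      iteratedFDeriv_succ_apply_right v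
    have l2 : iteratedFDeriv ℝ (k+1) f₂ x v = M₂ (v (Fin.last k)) :=
      iteratedFDeriv_succ_apply_right v
    -- tangential part dies
    have hU := Ulem e n₀ c hplane hrelopen k f₁ f₂ h₁ h₂
      (fun m hm y hy => hj m (by omega) y hy) t ht x hx
    have kill : M₁ t = M₂ t := by
      rw [hM₁, hM₂, ← evalConst k h₁ t x (Fin.init v), ← evalConst k h₂ t x (Fin.init v), hU]
    -- normal part: recursion
    have hjn : ∀ m < k, ∀ y ∈ e,
        iteratedFDeriv ℝ m (fun z => fderiv ℝ f₁ z n₀) y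
          = iteratedFDeriv ℝ m (fun z => fderiv ℝ f₂ z n₀) y := by
      intro m hm y hy
      ext w
      rw [evalConst m h₁ n₀ y w, evalConst m h₂ n₀ y w, jfd (hj (m+1) (by omega) y hy)]
    have IH' := IH (fun z => fderiv ℝ f₁ z n₀) (fun z => fderiv ℝ f₂ z n₀)
      (smoothD h₁ n₀) (smoothD h₂ n₀) hjn x hx (Fin.init v)
    have em₁ : iteratedFDeriv ℝ k (fun z => fderiv ℝ f₁ z n₀) x (Fin.init v) = M₁ n₀ :=
      evalConst k h₁ n₀ x (Fin.init v)
    have em₂ : iteratedFDeriv ℝ k (fun z => fderiv ℝ f₂ z n₀) x (Fin.init v) = M₂ n₀ :=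
      evalConst k h₂ n₀ x (Fin.init v)
    have en₁ : iteratedFDeriv ℝ k (fun z => fderiv ℝ f₁ z n₀) x (fun _ => n₀)
        = iteratedFDeriv ℝ (k+1) f₁ x (fun _ => n₀) := by
      rw [evalConst k h₁ n₀ x (fun _ => n₀)]
      exact (iteratedFDeriv_succ_apply_right (fun _ => n₀) :
        iteratedFDeriv ℝ (k+1) f₁ x (fun _ => n₀)
          = (iteratedFDeriv ℝ k (fderiv ℝ f₁) x (fun _ => n₀)) n₀).symm
    have en₂ : iteratedFDeriv ℝ k (fun z => fderiv ℝ f₂ z n₀) x (fun _ => n₀)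
        = iteratedFDeriv ℝ (k+1) f₂ x (fun _ => n₀) := by
      rw [evalConst k h₂ n₀ x (fun _ => n₀)]
      exact (iteratedFDeriv_succ_apply_right (fun _ => n₀) :
        iteratedFDeriv ℝ (k+1) f₂ x (fun _ => n₀)
          = (iteratedFDeriv ℝ k (fderiv ℝ f₂) x (fun _ => n₀)) n₀).symm
    have hMn : M₁ n₀ - M₂ n₀ = (∏ i : Fin k, ⟪Fin.init v i, n₀⟫) •
        (iteratedFDeriv ℝ (k+1) f₁ x (fun _ => n₀)
          - iteratedFDeriv ℝ (k+1) f₂ x (fun _ => n₀)) := by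
      rw [← em₁, ← em₂, IH', en₁, en₂]
    have hprodsplit : (∏ i : Fin (k+1), ⟪v i, n₀⟫)
        = (∏ i : Fin k, ⟪Fin.init v i, n₀⟫) * β := by
      rw [Fin.prod_univ_castSucc]
      rfl
    calc iteratedFDeriv ℝ (k+1) f₁ x v - iteratedFDeriv ℝ (k+1) f₂ x v
        = M₁ (β • n₀ + t) - M₂ (β • n₀ + t) := by rw [l1, l2, ← hsplit]
      _ = β • (M₁ n₀ - M₂ n₀) + (M₁ t - M₂ t) := by
          rw [map_add, map_add, map_smul, map_smul, smul_sub]; abel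
      _ = β • (M₁ n₀ - M₂ n₀) := by rw [kill, sub_self, add_zero]
      _ = (∏ i : Fin (k+1), ⟪v i, n₀⟫) •
          (iteratedFDeriv ℝ (k+1) f₁ x (fun _ => n₀)
            - iteratedFDeriv ℝ (k+1) f₂ x (fun _ => n₀)) := by
          rw [hMn, hprodsplit, smul_smul, mul_comm]

section Bilinear

variable {F G H : Type} [NormedAddCommGroup F] [NormedSpace ℝ F]
  [NormedAddCommGroup G] [NormedSpace ℝ G] [NormedAddCommGroup H] [NormedSpace ℝ H]

/-- `B₁ B u p = (B u).comp p`. -/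
noncomputable def B₁ (B : F →L[ℝ] G →L[ℝ] H) :
    F →L[ℝ] ((E) →L[ℝ] G) →L[ℝ] ((E) →L[ℝ] H) :=
  (ContinuousLinearMap.compL ℝ E G H).comp B

/-- `B₂ B p u = (fun w => B (p w) u)`. -/
noncomputable def B₂ (B : F →L[ℝ] G →L[ℝ] H) :
    ((E) →L[ℝ] F) →L[ℝ] G →L[ℝ] ((E) →L[ℝ] H) :=
  ((ContinuousLinearMap.compL ℝ E F H).comp B.flip).flip

@[simp] lemma B₁_apply (B : F →L[ℝ] G →L[ℝ] H) (u : F) (p : (E) →L[ℝ] G) (w : E) :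
    B₁ B u p w = B u (p w) := rfl

@[simp] lemma B₂_apply (B : F →L[ℝ] G →L[ℝ] H) (p : (E) →L[ℝ] F) (u : G) (w : E) :
    B₂ B p u w = B (p w) u := rfl

lemma bilin_smooth (B : F →L[ℝ] G →L[ℝ] H) {f : E → F} {g : E → G}
    (hf : ContDiff ℝ (⊤ : ℕ∞) f) (hg : ContDiff ℝ (⊤ : ℕ∞) g) :
    ContDiff ℝ (⊤ : ℕ∞) (fun y => B (f y) (g y)) :=
  B.isBoundedBilinearMap.contDiff.comp (hf.prodMk hg)

lemma fderiv_bilin (B : F →L[ℝ] G →L[ℝ] H) {f : E → F} {g : E → G}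
    (hf : ContDiff ℝ (⊤ : ℕ∞) f) (hg : ContDiff ℝ (⊤ : ℕ∞) g) :
    fderiv ℝ (fun y => B (f y) (g y))
      = fun y => B₁ (d := d) B (f y) (fderiv ℝ g y) + B₂ B (fderiv ℝ f y) (g y) := by
  funext y
  have hb := B.isBoundedBilinearMap.hasFDerivAt (f y, g y)
  have hp : HasFDerivAt (fun z : E => (f z, g z))
      ((fderiv ℝ f y).prod (fderiv ℝ g y)) y :=
    ((hf.differentiable (by simp) y).hasFDerivAt.prodMk
      ((hg.differentiable (by simp) y).hasFDerivAt))
  have hcomp := hb.comp y hp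
  have hfd : fderiv ℝ (fun y => B (f y) (g y)) y
      = (B.isBoundedBilinearMap.deriv (f y, g y)).comp
          ((fderiv ℝ f y).prod (fderiv ℝ g y)) := hcomp.fderiv
  rw [hfd]
  ext w
  simp [IsBoundedBilinearMap.deriv_apply]

end Bilinear

/-- Pointwise Leibniz jet lemma: if jets of `f₁,f₂` and `g₁,g₂` of order `≤ k`
agree at `x`, then so do jets of `B (f ·) (g ·)`. -/
lemma LJ (k : ℕ) :
    ∀ {F G H : Type} [NormedAddCommGroup F] [NormedSpace ℝ F]
      [NormedAddCommGroup G] [NormedSpace ℝ G] [NormedAddCommGroup H] [NormedSpace ℝ H]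
      (B : F →L[ℝ] G →L[ℝ] H) (f₁ f₂ : E → F) (g₁ g₂ : E → G),
      ContDiff ℝ (⊤ : ℕ∞) f₁ → ContDiff ℝ (⊤ : ℕ∞) f₂ → ContDiff ℝ (⊤ : ℕ∞) g₁ → ContDiff ℝ (⊤ : ℕ∞) g₂ →
      ∀ x : E, (∀ m ≤ k, iteratedFDeriv ℝ m f₁ x = iteratedFDeriv ℝ m f₂ x) →
      (∀ m ≤ k, iteratedFDeriv ℝ m g₁ x = iteratedFDeriv ℝ m g₂ x) →
      iteratedFDeriv ℝ k (fun y => B (f₁ y) (g₁ y)) x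
        = iteratedFDeriv ℝ k (fun y => B (f₂ y) (g₂ y)) x := by
  induction k with
  | zero =>
    intro F G H _ _ _ _ _ _ B f₁ f₂ g₁ g₂ hf₁ hf₂ hg₁ hg₂ x hfj hgj
    ext v
    simp only [iteratedFDeriv_zero_apply]
    rw [jet0 (hfj 0 le_rfl), jet0 (hgj 0 le_rfl)]
  | succ k IH =>
    intro F G H _ _ _ _ _ _ B f₁ f₂ g₁ g₂ hf₁ hf₂ hg₁ hg₂ x hfj hgj
    have r₁ : iteratedFDeriv ℝ (k+1) (fun y => B (f₁ y) (g₁ y)) x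
        = (continuousMultilinearCurryRightEquiv' ℝ k E H).symm
            (iteratedFDeriv ℝ k (fderiv ℝ (fun y => B (f₁ y) (g₁ y))) x) :=
      iteratedFDeriv_succ_eq_comp_right
    have r₂ : iteratedFDeriv ℝ (k+1) (fun y => B (f₂ y) (g₂ y)) x
        = (continuousMultilinearCurryRightEquiv' ℝ k E H).symm
            (iteratedFDeriv ℝ k (fderiv ℝ (fun y => B (f₂ y) (g₂ y))) x) :=
      iteratedFDeriv_succ_eq_comp_right
    rw [r₁, r₂]
    congr 1
    rw [fderiv_bilin B hf₁ hg₁, fderiv_bilin B hf₂ hg₂]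
    have hs₁ : iteratedFDeriv ℝ k
        (fun y => B₁ (d := d) B (f₁ y) (fderiv ℝ g₁ y) + B₂ B (fderiv ℝ f₁ y) (g₁ y)) x
        = iteratedFDeriv ℝ k (fun y => B₁ (d := d) B (f₁ y) (fderiv ℝ g₁ y)) x
          + iteratedFDeriv ℝ k (fun y => B₂ B (fderiv ℝ f₁ y) (g₁ y)) x :=
      iteratedFDeriv_add_apply
        ((bilin_smooth _ hf₁ (hg₁.fderiv_right topsucc)).of_le (by exact_mod_cast le_top)).contDiffAt
        ((bilin_smooth _ (hf₁.fderiv_right topsucc) hg₁).of_le (by exact_mod_cast le_top)).contDiffAt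
    have hs₂ : iteratedFDeriv ℝ k
        (fun y => B₁ (d := d) B (f₂ y) (fderiv ℝ g₂ y) + B₂ B (fderiv ℝ f₂ y) (g₂ y)) x
        = iteratedFDeriv ℝ k (fun y => B₁ (d := d) B (f₂ y) (fderiv ℝ g₂ y)) x
          + iteratedFDeriv ℝ k (fun y => B₂ B (fderiv ℝ f₂ y) (g₂ y)) x :=
      iteratedFDeriv_add_apply
        ((bilin_smooth _ hf₂ (hg₂.fderiv_right topsucc)).of_le (by exact_mod_cast le_top)).contDiffAt
        ((bilin_smooth _ (hf₂.fderiv_right topsucc) hg₂).of_le (by exact_mod_cast le_top)).contDiffAt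
    rw [hs₁, hs₂]
    have h1 := IH (B₁ (d := d) B) f₁ f₂ (fderiv ℝ g₁) (fderiv ℝ g₂) hf₁ hf₂
      (hg₁.fderiv_right topsucc) (hg₂.fderiv_right topsucc) x
      (fun m hm => hfj m (by omega)) (fun m hm => jfd (hgj (m+1) (by omega)))
    have h2 := IH (B₂ (d := d) B) (fderiv ℝ f₁) (fderiv ℝ f₂) g₁ g₂
      (hf₁.fderiv_right topsucc) (hf₂.fderiv_right topsucc) hg₁ hg₂ x
      (fun m hm => jfd (hfj (m+1) (by omega))) (fun m hm => hgj m (by omega))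
    rw [h1, h2]

/-- Pointwise Leibniz jet lemma with top term: if jets of `f` of order `< k`
and jets of `g` of order `≤ k` agree at `x`, the jump of the `k`-jet of
`B (f ·) (g ·)` is the top term. -/
lemma LJtop (k : ℕ) :
    ∀ {F G H : Type} [NormedAddCommGroup F] [NormedSpace ℝ F]
      [NormedAddCommGroup G] [NormedSpace ℝ G] [NormedAddCommGroup H] [NormedSpace ℝ H]
      (B : F →L[ℝ] G →L[ℝ] H) (f₁ f₂ : E → F) (g₁ g₂ : E → G),
      ContDiff ℝ (⊤ : ℕ∞) f₁ → ContDiff ℝ (⊤ : ℕ∞) f₂ → ContDiff ℝ (⊤ : ℕ∞) g₁ → ContDiff ℝ (⊤ : ℕ∞) g₂ →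
      ∀ x : E, (∀ m < k, iteratedFDeriv ℝ m f₁ x = iteratedFDeriv ℝ m f₂ x) →
      (∀ m ≤ k, iteratedFDeriv ℝ m g₁ x = iteratedFDeriv ℝ m g₂ x) →
      ∀ v : Fin k → E,
      iteratedFDeriv ℝ k (fun y => B (f₁ y) (g₁ y)) x v
        - iteratedFDeriv ℝ k (fun y => B (f₂ y) (g₂ y)) x v
        = B (iteratedFDeriv ℝ k f₁ x v - iteratedFDeriv ℝ k f₂ x v) (g₁ x) := by
  induction k with
  | zero =>
    intro F G H _ _ _ _ _ _ B f₁ f₂ g₁ g₂ hf₁ hf₂ hg₁ hg₂ x hfj hgj v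
    simp only [iteratedFDeriv_zero_apply]
    rw [← jet0 (hgj 0 le_rfl), map_sub, ContinuousLinearMap.sub_apply]
  | succ k IH =>
    intro F G H _ _ _ _ _ _ B f₁ f₂ g₁ g₂ hf₁ hf₂ hg₁ hg₂ x hfj hgj v
    have l1 : iteratedFDeriv ℝ (k+1) (fun y => B (f₁ y) (g₁ y)) x v
        = (iteratedFDeriv ℝ k (fderiv ℝ (fun y => B (f₁ y) (g₁ y))) x (Fin.init v))
            (v (Fin.last k)) := iteratedFDeriv_succ_apply_right v
    have l2 : iteratedFDeriv ℝ (k+1) (fun y => B (f₂ y) (g₂ y)) x v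
        = (iteratedFDeriv ℝ k (fderiv ℝ (fun y => B (f₂ y) (g₂ y))) x (Fin.init v))
            (v (Fin.last k)) := iteratedFDeriv_succ_apply_right v
    have r1 : iteratedFDeriv ℝ (k+1) f₁ x v
        = (iteratedFDeriv ℝ k (fderiv ℝ f₁) x (Fin.init v)) (v (Fin.last k)) :=
      iteratedFDeriv_succ_apply_right v
    have r2 : iteratedFDeriv ℝ (k+1) f₂ x v
        = (iteratedFDeriv ℝ k (fderiv ℝ f₂) x (Fin.init v)) (v (Fin.last k)) :=
      iteratedFDeriv_succ_apply_right v
    rw [l1, l2, r1, r2, fderiv_bilin B hf₁ hg₁, fderiv_bilin B hf₂ hg₂]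
    have hs₁ : iteratedFDeriv ℝ k
        (fun y => B₁ (d := d) B (f₁ y) (fderiv ℝ g₁ y) + B₂ B (fderiv ℝ f₁ y) (g₁ y)) x
        = iteratedFDeriv ℝ k (fun y => B₁ (d := d) B (f₁ y) (fderiv ℝ g₁ y)) x
          + iteratedFDeriv ℝ k (fun y => B₂ B (fderiv ℝ f₁ y) (g₁ y)) x :=
      iteratedFDeriv_add_apply
        ((bilin_smooth _ hf₁ (hg₁.fderiv_right topsucc)).of_le (by exact_mod_cast le_top)).contDiffAt
        ((bilin_smooth _ (hf₁.fderiv_right topsucc) hg₁).of_le (by exact_mod_cast le_top)).contDiffAt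
    have hs₂ : iteratedFDeriv ℝ k
        (fun y => B₁ (d := d) B (f₂ y) (fderiv ℝ g₂ y) + B₂ B (fderiv ℝ f₂ y) (g₂ y)) x
        = iteratedFDeriv ℝ k (fun y => B₁ (d := d) B (f₂ y) (fderiv ℝ g₂ y)) x
          + iteratedFDeriv ℝ k (fun y => B₂ B (fderiv ℝ f₂ y) (g₂ y)) x :=
      iteratedFDeriv_add_apply
        ((bilin_smooth _ hf₂ (hg₂.fderiv_right topsucc)).of_le (by exact_mod_cast le_top)).contDiffAt
        ((bilin_smooth _ (hf₂.fderiv_right topsucc) hg₂).of_le (by exact_mod_cast le_top)).contDiffAt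
    rw [hs₁, hs₂]
    have h1 := LJ k (B₁ (d := d) B) f₁ f₂ (fderiv ℝ g₁) (fderiv ℝ g₂) hf₁ hf₂
      (hg₁.fderiv_right topsucc) (hg₂.fderiv_right topsucc) x
      (fun m hm => hfj m (by omega)) (fun m hm => jfd (hgj (m+1) (by omega)))
    have h2 := IH (B₂ (d := d) B) (fderiv ℝ f₁) (fderiv ℝ f₂) g₁ g₂
      (hf₁.fderiv_right topsucc) (hf₂.fderiv_right topsucc) hg₁ hg₂ x
      (fun m hm => jfd (hfj (m+1) (by omega))) (fun m hm => hgj m (by omega))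
      (Fin.init v)
    rw [h1]
    -- assemble
    have key : iteratedFDeriv ℝ k (fun y => B₂ B (fderiv ℝ f₁ y) (g₁ y)) x (Fin.init v)
        - iteratedFDeriv ℝ k (fun y => B₂ B (fderiv ℝ f₂ y) (g₂ y)) x (Fin.init v)
        = B₂ B (iteratedFDeriv ℝ k (fderiv ℝ f₁) x (Fin.init v)
            - iteratedFDeriv ℝ k (fderiv ℝ f₂) x (Fin.init v)) (g₁ x) := h2
    have expand : ∀ w : E,
        (iteratedFDeriv ℝ k (fun y => B₁ (d := d) B (f₂ y) (fderiv ℝ g₂ y)) x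
          + iteratedFDeriv ℝ k (fun y => B₂ B (fderiv ℝ f₁ y) (g₁ y)) x) (Fin.init v) w
        - (iteratedFDeriv ℝ k (fun y => B₁ (d := d) B (f₂ y) (fderiv ℝ g₂ y)) x
          + iteratedFDeriv ℝ k (fun y => B₂ B (fderiv ℝ f₂ y) (g₂ y)) x) (Fin.init v) w
        = (iteratedFDeriv ℝ k (fun y => B₂ B (fderiv ℝ f₁ y) (g₁ y)) x (Fin.init v)
          - iteratedFDeriv ℝ k (fun y => B₂ B (fderiv ℝ f₂ y) (g₂ y)) x (Fin.init v)) w := by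
      intro w
      simp only [ContinuousMultilinearMap.add_apply, ContinuousLinearMap.add_apply,
        ContinuousLinearMap.sub_apply]
      abel
    rw [expand (v (Fin.last k)), key]
    simp only [B₂_apply, ContinuousLinearMap.sub_apply]

end ConvJumpAux

open ConvJumpAux in
/-- Remark 3.4: on a planar interior facet `e` with unit normal `n`, if the
transport field `u_h` (with one-sided restrictions `uhp`, `uhm`) is
divergence-free on both adjacent elements and its normal component is
continuous across `e`, and the fields `u`, `v` (restrictions `up/um`,
`vp/vm`) have all derivatives of order `≤ α'` continuous across `e`, then at
any `x ∈ e` with `u_h(x)·n ≠ 0` the jump of the iterated convective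
derivative satisfies
`⟦(u_h·∇)^{α'+1} v⟧ = (u_h·n)^{α'+1} ⟦∂_n^{α'+1} v⟧`, and hence the weighted
jump identity
`η ⟦∂_n^{α'+1}u⟧·⟦∂_n^{α'+1}v⟧ =
  (η/|u_h·n|^{2(α'+1)}) ⟦∂_{u_h}^{α'+1}u⟧·⟦∂_{u_h}^{α'+1}v⟧` holds. -/
theorem convective_jump_identity {d α' : ℕ}
    (e : Set (EuclideanSpace ℝ (Fin d)))
    (n : EuclideanSpace ℝ (Fin d)) (hn : ‖n‖ = 1) (c : ℝ)
    -- e lies in the hyperplane {y : ⟪y,n⟫ = c} and is relatively open in it: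
    (hplane : ∀ x ∈ e, ⟪x, n⟫ = c)
    (hrelopen : ∀ x ∈ e, ∃ δ > (0:ℝ), ∀ y, ⟪y, n⟫ = c → ‖y - x‖ < δ → y ∈ e)
    (uhp uhm up um vp vm :
      EuclideanSpace ℝ (Fin d) → EuclideanSpace ℝ (Fin d))
    (huhp : ContDiff ℝ (⊤ : ℕ∞) uhp) (huhm : ContDiff ℝ (⊤ : ℕ∞) uhm)
    (hup : ContDiff ℝ (⊤ : ℕ∞) up) (hum : ContDiff ℝ (⊤ : ℕ∞) um)
    (hvp : ContDiff ℝ (⊤ : ℕ∞) vp) (hvm : ContDiff ℝ (⊤ : ℕ∞) vm)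
    -- u_h is divergence-free on both sides:
    (hdivp : ∀ x, (∑ i, fderiv ℝ uhp x (EuclideanSpace.single i 1) i) = 0)
    (hdivm : ∀ x, (∑ i, fderiv ℝ uhm x (EuclideanSpace.single i 1) i) = 0)
    -- normal component of u_h is continuous across e:
    (huhn : ∀ x ∈ e, ⟪uhp x, n⟫ = ⟪uhm x, n⟫)
    -- derivatives of u_h, u, v of order ≤ α' are continuous across e:
    (huhc : ∀ m ≤ α', ∀ x ∈ e, iteratedFDeriv ℝ m uhp x = iteratedFDeriv ℝ m uhm x)
    (huc : ∀ m ≤ α', ∀ x ∈ e, iteratedFDeriv ℝ m up x = iteratedFDeriv ℝ m um x)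
    (hvc : ∀ m ≤ α', ∀ x ∈ e, iteratedFDeriv ℝ m vp x = iteratedFDeriv ℝ m vm x)
    -- the normal-derivative and convective-derivative operators:
    (Dn : (EuclideanSpace ℝ (Fin d) → EuclideanSpace ℝ (Fin d)) →
          EuclideanSpace ℝ (Fin d) → EuclideanSpace ℝ (Fin d))
    (hDn : Dn = fun g y => fderiv ℝ g y n)
    (Cp Cm : (EuclideanSpace ℝ (Fin d) → EuclideanSpace ℝ (Fin d)) →
          EuclideanSpace ℝ (Fin d) → EuclideanSpace ℝ (Fin d))
    (hCp : Cp = fun g y => fderiv ℝ g y (uhp y))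
    (hCm : Cm = fun g y => fderiv ℝ g y (uhm y))
    (x : EuclideanSpace ℝ (Fin d)) (hx : x ∈ e)
    (hxn : ⟪uhp x, n⟫ ≠ 0)
    (η : ℝ) :
    ((Cp^[α' + 1] vp) x - (Cm^[α' + 1] vm) x =
      (⟪uhp x, n⟫) ^ (α' + 1) • ((Dn^[α' + 1] vp) x - (Dn^[α' + 1] vm) x)) ∧
    (η * ⟪(Dn^[α' + 1] up) x - (Dn^[α' + 1] um) x,
          (Dn^[α' + 1] vp) x - (Dn^[α' + 1] vm) x⟫ =
      (η / |⟪uhp x, n⟫| ^ (2 * (α' + 1))) *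
        ⟪(Cp^[α' + 1] up) x - (Cm^[α' + 1] um) x,
          (Cp^[α' + 1] vp) x - (Cm^[α' + 1] vm) x⟫) := by
  subst hDn hCp hCm
  have hn1 : ⟪n, n⟫ = 1 := by
    rw [real_inner_self_eq_norm_mul_norm, hn]; norm_num
  let Bap : (EuclideanSpace ℝ (Fin d) →L[ℝ] EuclideanSpace ℝ (Fin d)) →L[ℝ]
      EuclideanSpace ℝ (Fin d) →L[ℝ] EuclideanSpace ℝ (Fin d) :=
    ContinuousLinearMap.id ℝ _
  have hBap : ∀ (L : EuclideanSpace ℝ (Fin d) →L[ℝ] EuclideanSpace ℝ (Fin d))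
      (u : EuclideanSpace ℝ (Fin d)), Bap L u = L u := fun _ _ => rfl
  -- smoothness of convective iterates
  have smoothit : ∀ (w : EuclideanSpace ℝ (Fin d) → EuclideanSpace ℝ (Fin d)),
      ContDiff ℝ (⊤ : ℕ∞) w → ∀ (f : EuclideanSpace ℝ (Fin d) → EuclideanSpace ℝ (Fin d)),
      ContDiff ℝ (⊤ : ℕ∞) f → ∀ j : ℕ,
      ContDiff ℝ (⊤ : ℕ∞) ((fun g y => fderiv ℝ g y (w y))^[j] f) := by
    intro w hw f hf j
    induction j with
    | zero => simpa using hf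
    | succ j IH =>
      rw [Function.iterate_succ_apply']
      exact (IH.fderiv_right topsucc).clm_apply hw
  -- Dn iterates are iterated derivatives in direction n
  have hdn : ∀ (m : ℕ) (h : EuclideanSpace ℝ (Fin d) → EuclideanSpace ℝ (Fin d)),
      ContDiff ℝ (⊤ : ℕ∞) h →
      (fun (G : EuclideanSpace ℝ (Fin d) → EuclideanSpace ℝ (Fin d)) z =>
        fderiv ℝ G z n)^[m] h x = iteratedFDeriv ℝ m h x (fun _ => n) := by
    intro m
    induction m with
    | zero => intro h hh; simp
    | succ m IHm =>
      intro h hh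
      simp only [Function.iterate_succ_apply]
      rw [IHm _ (smoothD hh n)]
      rw [evalConst m hh n x (fun _ => n)]
      exact (iteratedFDeriv_succ_apply_right (fun _ => n) :
        iteratedFDeriv ℝ (m+1) h x (fun _ => n)
          = (iteratedFDeriv ℝ m (fderiv ℝ h) x (fun _ => n)) n).symm
  -- the main jump identity
  have key : ∀ (f g : EuclideanSpace ℝ (Fin d) → EuclideanSpace ℝ (Fin d)),
      ContDiff ℝ (⊤ : ℕ∞) f → ContDiff ℝ (⊤ : ℕ∞) g →
      (∀ m ≤ α', ∀ y ∈ e, iteratedFDeriv ℝ m f y = iteratedFDeriv ℝ m g y) →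
      (fun g y => fderiv ℝ g y (uhp y))^[α' + 1] f x
        - (fun g y => fderiv ℝ g y (uhm y))^[α' + 1] g x
        = (⟪uhp x, n⟫) ^ (α' + 1) •
          ((fun g y => fderiv ℝ g y n)^[α' + 1] f x
            - (fun g y => fderiv ℝ g y n)^[α' + 1] g x) := by
    intro f g hf hg hjets
    have hQ : ∀ j, ∀ m, m + j ≤ α' →
        iteratedFDeriv ℝ m ((fun g y => fderiv ℝ g y (uhp y))^[j] f) x
          = iteratedFDeriv ℝ m ((fun g y => fderiv ℝ g y (uhm y))^[j] g) x := by
      intro j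
      induction j with
      | zero =>
        intro m hm
        simp only [Function.iterate_zero, id_eq]
        exact hjets m (by omega) x hx
      | succ j IHj =>
        intro m hm
        simp only [Function.iterate_succ_apply']
        exact LJ m Bap (fderiv ℝ ((fun g y => fderiv ℝ g y (uhp y))^[j] f))
          (fderiv ℝ ((fun g y => fderiv ℝ g y (uhm y))^[j] g)) uhp uhm
          ((smoothit uhp huhp f hf j).fderiv_right topsucc)
          ((smoothit uhm huhm g hg j).fderiv_right topsucc) huhp huhm x
          (fun m' hm' => jfd (IHj (m' + 1) (by omega)))
          (fun m' hm' => huhc m' (by omega) x hx)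
    have hR : ∀ k j, j + k = α' + 1 →
        (fun g y => fderiv ℝ g y (uhp y))^[α' + 1] f x
          - (fun g y => fderiv ℝ g y (uhm y))^[α' + 1] g x
        = iteratedFDeriv ℝ k ((fun g y => fderiv ℝ g y (uhp y))^[j] f) x (fun _ => uhp x)
          - iteratedFDeriv ℝ k ((fun g y => fderiv ℝ g y (uhm y))^[j] g) x
              (fun _ => uhp x) := by
      intro k
      induction k with
      | zero =>
        intro j hj
        obtain rfl : j = α' + 1 := by omega
        simp
      | succ k IHk =>
        intro j hj
        rw [IHk (j + 1) (by omega)]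
        simp only [Function.iterate_succ_apply']
        have hLT := LJtop k Bap (fderiv ℝ ((fun g y => fderiv ℝ g y (uhp y))^[j] f))
          (fderiv ℝ ((fun g y => fderiv ℝ g y (uhm y))^[j] g)) uhp uhm
          ((smoothit uhp huhp f hf j).fderiv_right topsucc)
          ((smoothit uhm huhm g hg j).fderiv_right topsucc) huhp huhm x
          (fun m hm => jfd (hQ j (m + 1) (by omega)))
          (fun m hm => huhc m (by omega) x hx) (fun _ => uhp x)
        have r1 : iteratedFDeriv ℝ (k+1) ((fun g y => fderiv ℝ g y (uhp y))^[j] f) x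
            (fun _ => uhp x)
            = (iteratedFDeriv ℝ k (fderiv ℝ ((fun g y => fderiv ℝ g y (uhp y))^[j] f)) x
                (fun _ => uhp x)) (uhp x) :=
          iteratedFDeriv_succ_apply_right (fun _ => uhp x)
        have r2 : iteratedFDeriv ℝ (k+1) ((fun g y => fderiv ℝ g y (uhm y))^[j] g) x
            (fun _ => uhp x)
            = (iteratedFDeriv ℝ k (fderiv ℝ ((fun g y => fderiv ℝ g y (uhm y))^[j] g)) x
                (fun _ => uhp x)) (uhp x) :=
          iteratedFDeriv_succ_apply_right (fun _ => uhp x)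
        exact hLT.trans (by rw [hBap, ContinuousLinearMap.sub_apply, ← r1, ← r2])
    have h0 := hR (α' + 1) 0 (by omega)
    simp only [Function.iterate_zero, id_eq] at h0
    have hA := Aprod e n c hplane hrelopen hn1 (α' + 1) f g hf hg
      (fun m hm y hy => hjets m (by omega) y hy) x hx (fun _ => uhp x)
    have hprod : (∏ _i : Fin (α' + 1), ⟪uhp x, n⟫) = (⟪uhp x, n⟫) ^ (α' + 1) := by
      simp [Finset.prod_const]
    rw [h0, hA, hprod, hdn (α' + 1) f hf, hdn (α' + 1) g hg]
  constructor
  · exact key vp vm hvp hvm hvc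
  · have ju := key up um hup hum huc
    have jv := key vp vm hvp hvm hvc
    rw [ju, jv, real_inner_smul_left, real_inner_smul_right]
    have hb2 : |⟪uhp x, n⟫| ^ (2 * (α' + 1)) = ((⟪uhp x, n⟫) ^ (α' + 1)) ^ 2 := by
      rw [pow_mul, sq_abs, ← pow_mul, mul_comm 2 (α' + 1), pow_mul]
    rw [hb2]
    have hbK : (⟪uhp x, n⟫) ^ (α' + 1) ≠ 0 := pow_ne_zero _ hxn
    have halg : ∀ (q I : ℝ), q ≠ 0 → η * I = η / q ^ 2 * (q * (q * I)) := by
      intro q I hq; field_simp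
    exact halg _ _ hbK
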